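/- arXiv:2005.07459 — 4 statements merged into one kernel-verified Lean document; each statement's English description precedes it below -/
import Mathlib

section
/- Let a₁ ≥ 0 and a₂, a₃, a₄, a₅, a₆ > 0 be constants, let R > 0 be a constant (representing (Kξ/S)·log₂(1+γ₀)), and for λ with a₂·λ − a₁ > a₃ define ā(λ) = a₃/(a₂·λ − a₁) ∈ (0,1) and the energy-efficiency function f(λ) = (R/λ)·(1 − ā(λ)) / (a₄ + a₅·ā(λ) + a₆·R·(1 − ā(λ))). Then f is a quasi-concave function of λ on the interval D = {λ : a₂·λ − a₁ > a₃}. (Quasi-concavity of the energy efficiency in the AP density, from the proof of Theorem 3.) -/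
/-! Multiplying numerator and denominator by `λ (a₂λ − a₁)` writes the energy efficiency as
`N(λ)/P(λ)` with `N(λ) = R (a₂λ − a₁ − a₃)` affine and nonnegative on `D`, and `P(λ)` a positive
quadratic with leading coefficient `a₂ (a₄ + a₆R) ≥ 0`, hence convex. A nonnegative concave function
divided by a positive convex one is quasi-concave: for `c > 0` the superlevel set `{N/P ≥ c}` is the
superlevel set `{N − cP ≥ 0}` of a concave function. -/

open Set

theorem QuasiconcaveOn.congr {𝕜 E β : Type*} [Semiring 𝕜] [PartialOrder 𝕜] [AddCommMonoid E]
    [SMul 𝕜 E] [LE β] {s : Set E} {f g : E → β} (hf : QuasiconcaveOn 𝕜 s f) (hfg : EqOn f g s) :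
    QuasiconcaveOn 𝕜 s g := by
  intro r
  convert hf r using 1
  exact sep_ext_iff.2 fun x hx => by rw [hfg hx]

section LinearOrderedField

variable {𝕜 : Type*} [Field 𝕜] [LinearOrder 𝕜] [IsStrictOrderedRing 𝕜]

theorem ConcaveOn.quasiconcaveOn_div {E : Type*} [AddCommMonoid E] [SMul 𝕜 E] {s : Set E}
    {f g : E → 𝕜} (hf : ConcaveOn 𝕜 s f) (hg : ConvexOn 𝕜 s g) (hf₀ : ∀ x ∈ s, 0 ≤ f x)
    (hg₀ : ∀ x ∈ s, 0 < g x) : QuasiconcaveOn 𝕜 s (f / g) := by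
  intro c
  rcases le_or_gt c 0 with hc | hc
  · have : {x ∈ s | c ≤ (f / g) x} = s :=
      sep_eq_self_iff_mem_true.2 fun x hx => hc.trans (div_nonneg (hf₀ x hx) (hg₀ x hx).le)
    rw [this]
    exact hf.1
  · convert (hf.sub (hg.smul hc.le)).convex_ge 0 using 1
    refine sep_ext_iff.2 fun x hx => ?_
    simp only [Pi.div_apply, Pi.sub_apply, smul_eq_mul, sub_nonneg]
    exact le_div_iff₀ (hg₀ x hx)

theorem convexOn_quadratic {s : Set 𝕜} (hs : Convex 𝕜 s) {a : 𝕜} (ha : 0 ≤ a) (b c : 𝕜) :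
    ConvexOn 𝕜 s fun x => a * x ^ 2 + b * x + c := by
  refine ⟨hs, fun x _ y _ μ ν hμ hν hμν => ?_⟩
  obtain rfl : ν = 1 - μ := by linear_combination hμν
  simp only [smul_eq_mul]
  nlinarith [mul_nonneg ha (mul_nonneg (mul_nonneg hμ hν) (sq_nonneg (x - y)))]

end LinearOrderedField

/-- Quasi-concavity of the downlink energy efficiency in the access-point density `λ`
(from the proof of Theorem 3): the function
`f(λ) = (R/λ)·(1 − ā(λ)) / (a₄ + a₅·ā(λ) + a₆·R·(1 − ā(λ)))`, with
`ā(λ) = a₃/(a₂·λ − a₁)`, is quasi-concave on `D = {λ : a₂·λ − a₁ > a₃}`. -/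
theorem energy_efficiency_quasiconcave_in_ap_density
    (a₁ a₂ a₃ a₄ a₅ a₆ R : ℝ)
    (h₁ : 0 ≤ a₁) (h₂ : 0 < a₂) (h₃ : 0 < a₃) (h₄ : 0 < a₄) (h₅ : 0 < a₅)
    (h₆ : 0 < a₆) (hR : 0 < R) :
    QuasiconcaveOn ℝ {lam : ℝ | a₂ * lam - a₁ > a₃}
      (fun lam =>
        (R / lam) * (1 - a₃ / (a₂ * lam - a₁)) /
          (a₄ + a₅ * (a₃ / (a₂ * lam - a₁)) + a₆ * R * (1 - a₃ / (a₂ * lam - a₁)))) := by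
  set s := {lam : ℝ | a₂ * lam - a₁ > a₃}
  have hs : Convex ℝ s := by
    have : s = Ioi ((a₁ + a₃) / a₂) := by
      ext x
      change a₃ < a₂ * x - a₁ ↔ _
      rw [mem_Ioi, div_lt_iff₀' h₂]
      constructor <;> intro <;> linarith
    exact this ▸ convex_Ioi _
  have hpos : ∀ x ∈ s, 0 < x ∧ a₃ < a₂ * x - a₁ := fun x (hx : a₃ < a₂ * x - a₁) =>
    ⟨pos_of_mul_pos_right (by linarith : 0 < a₂ * x) h₂.le, hx⟩
  set N := fun x : ℝ => R * (a₂ * x - a₁ - a₃)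
  set P := fun x : ℝ => x * (a₄ * (a₂ * x - a₁) + a₅ * a₃ + a₆ * R * (a₂ * x - a₁ - a₃))
  have hN : ConcaveOn ℝ s N :=
    ((concaveOn_id hs).smul (mul_pos hR h₂).le).add_const (-(R * (a₁ + a₃))) |>.congr
      fun x _ => by simp only [N, id, smul_eq_mul, Pi.add_apply]; ring
  have hP : ConvexOn ℝ s P :=
    (convexOn_quadratic hs (by positivity : 0 ≤ a₂ * (a₄ + a₆ * R))
      (a₅ * a₃ - a₄ * a₁ - a₆ * R * (a₁ + a₃)) 0).congr fun x _ => by simp only [P]; ring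
  refine (hN.quasiconcaveOn_div hP (fun x hx => ?_) (fun x hx => ?_)).congr fun x hx => ?_
  all_goals obtain ⟨hx, ht⟩ := hpos x hx
  · exact mul_nonneg hR.le (by linarith)
  · have hτ : 0 < a₂ * x - a₁ - a₃ := sub_pos.2 ht
    have ht₀ : 0 < a₂ * x - a₁ := h₃.trans ht
    positivity
  · have ht₀ : a₂ * x - a₁ ≠ 0 := (h₃.trans ht).ne'
    simp only [Pi.div_apply, N, P]
    field_simp
end

section
/- Let b₁, b₂, b₃, b₄, b₅, b₆, b₇, b₈ > 0 with b₄ > b₂, let C > 0 be a constant (representing (Kξ/S)·log₂(1+γ₀)), and for N with b₄·N − b₃ > 0 define b̄(N) = (b₁ + b₂·N)/(b₄·N − b₃) and the energy-efficiency function f(N) = C·(1 − b̄(N)) / (b₅ + b₆·N + b₇·b̄(N) + b₈·C·(1 − b̄(N))). Then f is a quasi-concave function of N on the interval D = {N : b₄·N − b₃ > 0 and b̄(N) < 1} = ((b₁+b₃)/(b₄−b₂), ∞). (Quasi-concavity of the energy efficiency in the number of AP antennas, from the proof of Theorem 4.) -/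
/-!
The map `b̄` is linear-fractional, hence convex where its denominator is positive. So on `D` the
numerator `p = C (1 - b̄)` of `f` is concave and nonnegative, and the denominator is `r + b₈ p` with
`r = b₅ + b₆ N + b₇ b̄` convex and positive. For such a ratio `p / (r + k p)` the superlevel set
`{c ≤ p / (r + k p)}` is `{0 ≤ (1 - c k) p - c r}`, the superlevel set of a concave function as long
as `0 ≤ c ≤ 1 / k`; it is the whole domain for `c ≤ 0` and empty for `c > 1 / k`.
-/

open Set

theorem convexOn_inv_mul_sub {w z : ℝ} (hw : 0 < w) :
    ConvexOn ℝ (Ioi (z / w)) fun x => (w * x - z)⁻¹ := by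
  have h := (convexOn_zpow (𝕜 := ℝ) (-1)).comp_affineMap (AffineMap.lineMap (-z) (w - z))
  refine (h.subset ?_ (convex_Ioi _)).congr ?_
  · intro x hx
    simp only [mem_preimage, AffineMap.lineMap_apply_ring', mem_Ioi] at hx ⊢
    rw [div_lt_iff₀ hw] at hx
    linarith
  · intro x _
    simp only [Function.comp_apply, AffineMap.lineMap_apply_ring', zpow_neg_one]
    ring

theorem convexOn_linear_div_linear {u v w z : ℝ} (hw : 0 < w) (h : 0 ≤ u * w + v * z) :
    ConvexOn ℝ (Ioi (z / w)) fun x => (u + v * x) / (w * x - z) := by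
  refine (((convexOn_inv_mul_sub hw).smul (div_nonneg h hw.le)).add_const (v / w)).congr ?_
  intro x hx
  have hx : 0 < w * x - z := by rw [mem_Ioi, div_lt_iff₀ hw] at hx; linarith
  simp only [Pi.add_apply, smul_eq_mul]
  field_simp
  ring

theorem div_le_add_div_sub {u v w z : ℝ} (hw : 0 < w) (hvw : v < w) (h : 0 ≤ u * w + v * z) :
    z / w ≤ (u + z) / (w - v) := by
  rw [div_le_div_iff₀ hw (sub_pos.2 hvw)]
  linarith

theorem setOf_linear_div_linear_lt_one {u v w z : ℝ} (hw : 0 < w) (hvw : v < w)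
    (h : 0 ≤ u * w + v * z) :
    {x | w * x - z > 0 ∧ (u + v * x) / (w * x - z) < 1} = Ioi ((u + z) / (w - v)) := by
  ext x
  simp only [mem_ofPred_eq, mem_Ioi, div_lt_iff₀ (sub_pos.2 hvw)]
  constructor
  · rintro ⟨hpos, hlt⟩
    rw [div_lt_one hpos] at hlt
    linarith
  · intro hx
    have hpos : 0 < w * x - z := by
      have := (div_le_add_div_sub hw hvw h).trans_lt ((div_lt_iff₀ (sub_pos.2 hvw)).2 hx)
      rw [div_lt_iff₀ hw] at this
      linarith
    exact ⟨hpos, (div_lt_one hpos).2 (by linarith)⟩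

theorem ConcaveOn.quasiconcaveOn_div_add_mul {E : Type*} [AddCommMonoid E] [Module ℝ E]
    {s : Set E} {p r : E → ℝ} {k : ℝ} (hp : ConcaveOn ℝ s p) (hr : ConvexOn ℝ s r)
    (hk : 0 ≤ k) (hp₀ : ∀ x ∈ s, 0 ≤ p x) (hr₀ : ∀ x ∈ s, 0 < r x) :
    QuasiconcaveOn ℝ s fun x => p x / (r x + k * p x) := by
  intro c
  have hden : ∀ x ∈ s, 0 < r x + k * p x := fun x hx =>
    add_pos_of_pos_of_nonneg (hr₀ x hx) (mul_nonneg hk (hp₀ x hx))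
  have hsuper : ∀ x ∈ s, c ≤ p x / (r x + k * p x) ↔ 0 ≤ (1 - c * k) * p x - c * r x := by
    intro x hx
    rw [le_div_iff₀ (hden x hx)]
    constructor <;> intro h <;> linarith
  rcases le_or_gt c 0 with hc | hc
  · convert hp.1 using 1
    ext x
    exact and_iff_left_of_imp fun hx => hc.trans (div_nonneg (hp₀ x hx) (hden x hx).le)
  rcases le_or_gt (c * k) 1 with hck | hck
  · have hconc : ConcaveOn ℝ s fun x => (1 - c * k) * p x - c * r x :=
      (hp.smul (sub_nonneg.2 hck)).sub (hr.smul hc.le)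
    convert hconc.quasiconcaveOn 0 using 1
    ext x
    exact and_congr_right (hsuper x)
  · convert convex_empty (𝕜 := ℝ) (E := E)
    refine eq_empty_of_forall_notMem fun x ⟨hx, hcx⟩ => ?_
    have := (hsuper x hx).1 hcx
    nlinarith [hp₀ x hx, hr₀ x hx]

/-- Quasi-concavity of the downlink energy efficiency in the number of AP antennas `N`
(from the proof of Theorem 4): with `b̄(N) = (b₁ + b₂·N)/(b₄·N − b₃)` and
`f(N) = C·(1 − b̄(N)) / (b₅ + b₆·N + b₇·b̄(N) + b₈·C·(1 − b̄(N)))`, the domain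
`D = {N : b₄·N − b₃ > 0 ∧ b̄(N) < 1}` equals the interval `((b₁+b₃)/(b₄−b₂), ∞)`,
and `f` is quasi-concave on it. -/
theorem energy_efficiency_quasiconcave_in_antennas
    (b₁ b₂ b₃ b₄ b₅ b₆ b₇ b₈ C : ℝ)
    (h₁ : 0 < b₁) (h₂ : 0 < b₂) (h₃ : 0 < b₃) (h₄ : 0 < b₄) (h₅ : 0 < b₅)
    (h₆ : 0 < b₆) (h₇ : 0 < b₇) (h₈ : 0 < b₈) (h₄₂ : b₂ < b₄) (hC : 0 < C) :
    let bbar : ℝ → ℝ := fun N => (b₁ + b₂ * N) / (b₄ * N - b₃)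
    let f : ℝ → ℝ := fun N =>
      C * (1 - bbar N) / (b₅ + b₆ * N + b₇ * bbar N + b₈ * C * (1 - bbar N))
    {N : ℝ | b₄ * N - b₃ > 0 ∧ bbar N < 1} = Set.Ioi ((b₁ + b₃) / (b₄ - b₂)) ∧
      QuasiconcaveOn ℝ (Set.Ioi ((b₁ + b₃) / (b₄ - b₂))) f := by
  intro bbar f
  have hK : 0 ≤ b₁ * b₄ + b₂ * b₃ := by positivity
  have hdom := setOf_linear_div_linear_lt_one h₄ h₄₂ hK
  refine ⟨hdom, ?_⟩
  have hmem : ∀ N ∈ Ioi ((b₁ + b₃) / (b₄ - b₂)), 0 < N ∧ 0 < b₄ * N - b₃ ∧ bbar N < 1 :=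
    fun N hN => ⟨(div_pos (add_pos h₁ h₃) (sub_pos.2 h₄₂)).trans hN, hdom.symm.subset hN⟩
  have hbbar : ConvexOn ℝ (Ioi ((b₁ + b₃) / (b₄ - b₂))) bbar :=
    (convexOn_linear_div_linear h₄ hK).subset
      (Ioi_subset_Ioi (div_le_add_div_sub h₄ h₄₂ hK)) (convex_Ioi _)
  have hp : ConcaveOn ℝ (Ioi ((b₁ + b₃) / (b₄ - b₂))) fun N => C * (1 - bbar N) :=
    ((hbbar.neg.add_const 1).smul hC.le).congr fun N _ => by
      simp only [Pi.add_apply, Pi.neg_apply, smul_eq_mul]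
      ring
  have hr : ConvexOn ℝ (Ioi ((b₁ + b₃) / (b₄ - b₂))) fun N => b₅ + b₆ * N + b₇ * bbar N :=
    ((((convexOn_id (convex_Ioi _)).smul h₆.le).add_const b₅).add (hbbar.smul h₇.le)).congr
      fun N _ => by
        simp only [Pi.add_apply, id, smul_eq_mul]
        ring
  have hq := hp.quasiconcaveOn_div_add_mul hr h₈.le
    (fun N hN => mul_nonneg hC.le (sub_nonneg.2 (hmem N hN).2.2.le)) fun N hN => by
      obtain ⟨hN, hden, -⟩ := hmem N hN
      have : 0 ≤ bbar N := div_nonneg (by positivity) hden.le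
      positivity
  have hf : f = fun N =>
      C * (1 - bbar N) / (b₅ + b₆ * N + b₇ * bbar N + b₈ * (C * (1 - bbar N))) :=
    funext fun N => by simp only [f, mul_assoc]
  rw [hf]
  exact hq
end

section
/- Let b₁, b₂, b₃, b₄, b₅, b₆, b₇, b₈ > 0 with b₄ > b₂, let C > 0, and for N with b₄·N − b₃ > 0 define b̄(N) = (b₁ + b₂·N)/(b₄·N − b₃) and f(N) = C·(1 − b̄(N)) / (b₅ + b₆·N + b₇·b̄(N) + b₈·C·(1 − b̄(N))) on the domain D = ((b₁+b₃)/(b₄−b₂), ∞). If N₀ ∈ D is a stationary point of f, i.e. f′(N₀) = 0, then f attains its global maximum over D at N₀: f(N) ≤ f(N₀) for all N ∈ D. (Theorem 4: the optimal number of AP antennas is obtained by setting the first derivative of the energy efficiency to zero.) -/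
/-!
With `c = (b₁ + b₃)/(b₄ - b₂)` one has `1 - b̄(N) = (b₄ - b₂)(N - c)/(b₄N - b₃)`. Dividing
numerator and denominator of `f` by this factor gives `f = C / φ` on `D`, where
`φ(N) = b₈C + q(N)/((b₄ - b₂)(N - c))` with `q` quadratic; division with remainder by `N - c`
turns this into `φ(N) = a (N - c) + k + g/(N - c)` with `a, g ≥ 0` and `k > 0`. A stationary
point of `C/φ` is one of `φ`, i.e. `a (N₀ - c)² = g`, and then
`φ(N) - φ(N₀) = a (N - N₀)²/(N - c) ≥ 0`.
-/

open Filter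

lemma quadratic_div_linear_eq (α β γ s c N : ℝ) (hs : s ≠ 0) (hN : N - c ≠ 0) :
    (α * N ^ 2 + β * N + γ) / (s * (N - c)) =
      α / s * (N - c) + (2 * α * c + β) / s + (α * c ^ 2 + β * c + γ) / s / (N - c) := by
  field_simp
  ring

lemma mul_div_add_mul_eq_div_add_div (C u X e : ℝ) (hu : u ≠ 0) :
    C * u / (X + e * u) = C / (e + X / u) := by
  rw [← mul_div_mul_right C (e + X / u) hu, add_mul, div_mul_cancel₀ X hu, add_comm, mul_comm]

section AffineAddInv

variable {a k g c : ℝ}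

lemma hasDerivAt_affine_add_inv {x : ℝ} (hx : x ≠ c) :
    HasDerivAt (fun x => a * (x - c) + k + g / (x - c)) (a - g / (x - c) ^ 2) x := by
  have hsub : HasDerivAt (fun x : ℝ => x - c) 1 x := (hasDerivAt_id x).sub_const c
  exact (((hsub.const_mul a).add_const k).add
    ((hasDerivAt_const x g).div hsub (sub_ne_zero.2 hx))).congr_deriv (by ring)

lemma affine_add_inv_pos (ha : 0 ≤ a) (hk : 0 < k) (hg : 0 ≤ g) {x : ℝ} (hx : c < x) :
    0 < a * (x - c) + k + g / (x - c) := by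
  have hy : 0 < x - c := sub_pos.2 hx
  positivity

lemma affine_add_inv_le_of_sq_eq (ha : 0 ≤ a) {x₀ x : ℝ} (hx₀ : c < x₀) (hx : c < x)
    (hmin : a * (x₀ - c) ^ 2 = g) :
    a * (x₀ - c) + k + g / (x₀ - c) ≤ a * (x - c) + k + g / (x - c) := by
  have hy₀ : 0 < x₀ - c := sub_pos.2 hx₀
  have hy : 0 < x - c := sub_pos.2 hx
  have hdiff : a * (x - c) + k + g / (x - c) - (a * (x₀ - c) + k + g / (x₀ - c)) =
      a * (x - x₀) ^ 2 / (x - c) := by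
    rw [← hmin]
    field_simp
    ring
  have : 0 ≤ a * (x - x₀) ^ 2 / (x - c) := by positivity
  linarith

theorem div_affine_add_inv_le_of_deriv_eq_zero {C x₀ : ℝ} (hC : 0 < C) (ha : 0 ≤ a)
    (hk : 0 < k) (hg : 0 ≤ g) (hx₀ : c < x₀)
    (hstat : deriv (fun x => C / (a * (x - c) + k + g / (x - c))) x₀ = 0)
    {x : ℝ} (hx : c < x) :
    C / (a * (x - c) + k + g / (x - c)) ≤ C / (a * (x₀ - c) + k + g / (x₀ - c)) := by
  have hφ₀ := affine_add_inv_pos ha hk hg hx₀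
  have hderiv : HasDerivAt (fun x => C / (a * (x - c) + k + g / (x - c)))
      ((0 * (a * (x₀ - c) + k + g / (x₀ - c)) - C * (a - g / (x₀ - c) ^ 2)) /
        (a * (x₀ - c) + k + g / (x₀ - c)) ^ 2) x₀ :=
    (hasDerivAt_const x₀ C).div (hasDerivAt_affine_add_inv hx₀.ne') hφ₀.ne'
  have hmin : a * (x₀ - c) ^ 2 = g := by
    have hy₀ : (x₀ - c) ^ 2 ≠ 0 := pow_ne_zero 2 (sub_pos.2 hx₀).ne'
    have hzero := hderiv.deriv
    rw [hstat, eq_comm, div_eq_zero_iff] at hzero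
    rcases hzero with h | h
    · have : a - g / (x₀ - c) ^ 2 = 0 := by simpa [hC.ne'] using h
      rwa [sub_eq_zero, eq_div_iff hy₀] at this
    · exact absurd h (pow_ne_zero 2 hφ₀.ne')
  exact div_le_div_of_nonneg_left hC.le hφ₀ (affine_add_inv_le_of_sq_eq ha hx₀ hx hmin)

end AffineAddInv

section EnergyEfficiency

variable {b₁ b₂ b₃ b₄ b₅ b₆ b₇ b₈ C c N : ℝ}

lemma one_sub_div_eq_of_mul_eq (hc : c * (b₄ - b₂) = b₁ + b₃) (hN : b₄ * N - b₃ ≠ 0) :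
    1 - (b₁ + b₂ * N) / (b₄ * N - b₃) = (b₄ - b₂) * (N - c) / (b₄ * N - b₃) := by
  rw [eq_div_iff hN, sub_mul, div_mul_cancel₀ _ hN, one_mul]
  linear_combination hc

lemma energyEfficiency_eq (hc : c * (b₄ - b₂) = b₁ + b₃) (hs : b₄ - b₂ ≠ 0)
    (hN : b₄ * N - b₃ ≠ 0) (hNc : N - c ≠ 0) :
    C * (1 - (b₁ + b₂ * N) / (b₄ * N - b₃)) /
        (b₅ + b₆ * N + b₇ * ((b₁ + b₂ * N) / (b₄ * N - b₃))
          + b₈ * C * (1 - (b₁ + b₂ * N) / (b₄ * N - b₃))) =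
      C / (b₆ * b₄ / (b₄ - b₂) * (N - c)
        + (b₈ * C + (b₆ * (b₄ * c - b₃) + b₄ * (b₅ + b₆ * c) + b₇ * b₂) / (b₄ - b₂))
        + ((b₅ + b₆ * c) * (b₄ * c - b₃) + b₇ * (b₁ + b₂ * c)) / (b₄ - b₂) / (N - c)) := by
  have hu : (b₄ - b₂) * (N - c) / (b₄ * N - b₃) ≠ 0 := div_ne_zero (mul_ne_zero hs hNc) hN
  have hquot : (b₅ + b₆ * N + b₇ * ((b₁ + b₂ * N) / (b₄ * N - b₃))) /
      ((b₄ - b₂) * (N - c) / (b₄ * N - b₃)) =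
      (b₆ * b₄ * N ^ 2 + (b₅ * b₄ - b₆ * b₃ + b₇ * b₂) * N + (b₇ * b₁ - b₅ * b₃)) /
        ((b₄ - b₂) * (N - c)) := by
    rw [div_div_eq_mul_div, add_mul, mul_assoc b₇, div_mul_cancel₀ _ hN]
    ring
  rw [one_sub_div_eq_of_mul_eq hc hN, mul_div_add_mul_eq_div_add_div _ _ _ _ hu, hquot,
    quadratic_div_linear_eq _ _ _ _ _ _ hs hNc]
  ring

end EnergyEfficiency

/-- Theorem 4 (optimal number of AP antennas): a stationary point of the energy
efficiency `f(N) = C·(1 − b̄(N)) / (b₅ + b₆·N + b₇·b̄(N) + b₈·C·(1 − b̄(N)))`,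
`b̄(N) = (b₁ + b₂·N)/(b₄·N − b₃)`, on the domain `D = ((b₁+b₃)/(b₄−b₂), ∞)` is a
global maximizer of `f` over `D`. -/
theorem stationary_point_is_optimal_antennas
    (b₁ b₂ b₃ b₄ b₅ b₆ b₇ b₈ C : ℝ)
    (h₁ : 0 < b₁) (h₂ : 0 < b₂) (h₃ : 0 < b₃) (h₄ : 0 < b₄) (h₅ : 0 < b₅)
    (h₆ : 0 < b₆) (h₇ : 0 < b₇) (h₈ : 0 < b₈) (h₄₂ : b₂ < b₄) (hC : 0 < C)
    (f : ℝ → ℝ)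
    (hf : f = fun N =>
      C * (1 - (b₁ + b₂ * N) / (b₄ * N - b₃)) /
        (b₅ + b₆ * N + b₇ * ((b₁ + b₂ * N) / (b₄ * N - b₃))
          + b₈ * C * (1 - (b₁ + b₂ * N) / (b₄ * N - b₃))))
    (N₀ : ℝ) (hN₀ : N₀ ∈ Set.Ioi ((b₁ + b₃) / (b₄ - b₂)))
    (hstat : deriv f N₀ = 0) :
    ∀ N ∈ Set.Ioi ((b₁ + b₃) / (b₄ - b₂)), f N ≤ f N₀ := by
  set c := (b₁ + b₃) / (b₄ - b₂)
  have hs : 0 < b₄ - b₂ := sub_pos.2 h₄₂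
  have hc : c * (b₄ - b₂) = b₁ + b₃ := div_mul_cancel₀ _ hs.ne'
  have hc₀ : 0 < c := by positivity
  have hc₃ : 0 < b₄ * c - b₃ := by
    have : (b₄ * c - b₃) * (b₄ - b₂) = b₄ * b₁ + b₂ * b₃ := by linear_combination b₄ * hc
    nlinarith [mul_pos h₄ h₁, mul_pos h₂ h₃]
  have hshape : ∀ N ∈ Set.Ioi c, f N = C / (b₆ * b₄ / (b₄ - b₂) * (N - c)
      + (b₈ * C + (b₆ * (b₄ * c - b₃) + b₄ * (b₅ + b₆ * c) + b₇ * b₂) / (b₄ - b₂))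
      + ((b₅ + b₆ * c) * (b₄ * c - b₃) + b₇ * (b₁ + b₂ * c)) / (b₄ - b₂) / (N - c)) := by
    intro N hN
    have hNc : 0 < N - c := sub_pos.2 hN
    have hN' : 0 < b₄ * N - b₃ := by nlinarith
    rw [hf]
    exact energyEfficiency_eq hc hs.ne' hN'.ne' hNc.ne'
  have hstat_shape := (eventuallyEq_of_mem (Ioi_mem_nhds hN₀) hshape).deriv_eq ▸ hstat
  intro N hN
  rw [hshape N hN, hshape N₀ hN₀]
  exact div_affine_add_inv_le_of_deriv_eq_zero hC (by positivity) (by positivity)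
    (by positivity) hN₀ hstat_shape hN
end

section
/- Consider γ̌(N) = A·((α−2)/(α·π·N·ρ_d) + (K−1)) + (ζ/(α·π·K·ρ_tr))·((K−1)·(α−2) + (α−1)/(N·ρ_d)) + λ·(K−1). If α > 2, K ≥ 2, A ≥ 1, λ > 0, ζ > 0, ρ_tr > 0 and ρ_d > 0, then for every N > 0 the SINR lower bound satisfies 1/γ̌(N) < 1/λ. In particular, an SINR target γ₀ is feasible for the constrained energy-efficiency maximization only if γ₀ < 1/λ_AP. (Feasibility lemma: the target SINR must be below the reciprocal of the AP density.) -/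
open Real

/-- Feasibility lemma: for every number of antennas `N > 0`, the SINR lower bound
`1/γ̌(N)` is strictly below `1/λ`, the reciprocal of the access-point density; hence a
target SINR `γ₀` is feasible only if `γ₀ < 1/λ_AP`. -/
theorem sinr_bound_below_reciprocal_density
    (α K ρtr ρd lam ζ A : ℝ)
    (hα : 2 < α) (hK : 2 ≤ K) (hA : 1 ≤ A) (hlam : 0 < lam) (hζ : 0 < ζ)
    (hρtr : 0 < ρtr) (hρd : 0 < ρd) :
    let invSinr : ℝ → ℝ := fun N =>
      A * ((α - 2) / (α * Real.pi * N * ρd) + (K - 1))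
        + (ζ / (α * Real.pi * K * ρtr)) * ((K - 1) * (α - 2) + (α - 1) / (N * ρd))
        + lam * (K - 1)
    ∀ N : ℝ, 0 < N → 1 / invSinr N < 1 / lam := by
  intro invSinr N hN
  have hα2 : 0 < α - 2 := sub_pos.2 hα
  have hα1 : 0 < α - 1 := by linarith
  have hα0 : 0 < α := by linarith
  have hK1 : 1 ≤ K - 1 := by linarith
  have hK0 : 0 < K := by linarith
  have hA0 : 0 < A := by linarith
  have hrest_pos : 0 < A * ((α - 2) / (α * π * N * ρd) + (K - 1))
      + (ζ / (α * π * K * ρtr)) * ((K - 1) * (α - 2) + (α - 1) / (N * ρd)) := by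
    positivity
  have hlam_le : lam ≤ lam * (K - 1) := le_mul_of_one_le_right hlam.le hK1
  have hlam_lt : lam < invSinr N := by
    simp only [invSinr]
    linarith
  exact one_div_lt_one_div_of_lt hlam hlam_lt
end
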